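/- arXiv:2508.08016 — 9 statements merged into one kernel-verified Lean document; each statement's English description precedes it below -/
import Mathlib

section
/- Let p ≠ 2, 5 be a prime number and let m be a natural number with m ∣ p − 1. If p ≡ 1 or 4 (mod 5) and some root φ of x² − x − 1 in F_p has multiplicative order m in F_p^×, then there exists a Fibonacci sequence (a_n) in F_p with all terms nonzero such that {a_n : n ∈ ℕ} = (F_p^×)^{(p−1)/m}. -/
/-- If `p ≠ 2, 5` is prime, `m ∣ p - 1`, `p ≡ 1, 4 (mod 5)` and some root `φ` of
`x² - x - 1` in `F_p` has multiplicative order `m`, then there is a Fibonacci sequence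
over `F_p`, all of whose terms are nonzero, whose set of values is `(F_p^×)^{(p-1)/m}`. -/
theorem fib_seq_of_root_order (p : ℕ) [Fact p.Prime] (hp2 : p ≠ 2) (hp5 : p ≠ 5)
    (m : ℕ) (hm : m ∣ p - 1)
    (h5 : p % 5 = 1 ∨ p % 5 = 4)
    (hroot : ∃ φ : ZMod p, φ ^ 2 = φ + 1 ∧ orderOf φ = m) :
    ∃ a : ℕ → ZMod p, (∀ n, a (n + 2) = a (n + 1) + a n) ∧ (∀ n, a n ≠ 0) ∧
      Set.range a = {x : ZMod p | ∃ b : ZMod p, b ≠ 0 ∧ b ^ ((p - 1) / m) = x} := by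
  obtain ⟨φ, hphi, hord⟩ := hroot
  have hp := Fact.out (p := p.Prime)
  have hφ0 : φ ≠ 0 := by
    intro h
    rw [h] at hphi
    simp at hphi
  -- the unit corresponding to φ
  set u : (ZMod p)ˣ := (isUnit_iff_ne_zero.mpr hφ0).unit with hu
  have huφ : (u : ZMod p) = φ := IsUnit.unit_spec _
  have hordu : orderOf u = m := by
    rw [← hord, ← huφ, orderOf_units]
  have hm0 : 0 < m := by
    rw [← hordu]; exact orderOf_pos u
  have hp1 : 0 < p - 1 := by
    have := hp.two_le; omega
  -- generator of the cyclic group of units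
  obtain ⟨g, hg⟩ := IsCyclic.exists_monoid_generator (α := (ZMod p)ˣ)
  have hgord : orderOf g = p - 1 := by
    rw [orderOf_eq_card_of_forall_mem_zpowers (fun y => mem_powers_iff_mem_zpowers.mp (hg y)), Nat.card_eq_fintype_card, ZMod.card_units]
  obtain ⟨k, hk'⟩ := hg u
  have hk : g ^ k = u := hk'
  -- hk : g ^ k = u
  have hmd : m = (p - 1) / Nat.gcd (p - 1) k := by
    rw [← hordu, ← hk, orderOf_pow, hgord]
  have hgcd_dvd : Nat.gcd (p - 1) k ∣ p - 1 := Nat.gcd_dvd_left _ _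
  set r : ℕ := (p - 1) / m with hr
  have hrd : r = Nat.gcd (p - 1) k := by
    rw [hr, hmd, Nat.div_div_self hgcd_dvd hp1.ne']
  have hrk : r ∣ k := hrd ▸ Nat.gcd_dvd_right _ _
  refine ⟨fun n => φ ^ n, ?_, fun n => pow_ne_zero n hφ0, ?_⟩
  · intro n
    show φ ^ (n + 2) = φ ^ (n + 1) + φ ^ n
    have : φ ^ (n + 2) = φ ^ n * φ ^ 2 := by ring
    rw [this, hphi]; ring
  ext x
  simp only [Set.mem_range, Set.mem_setOf_eq]
  constructor
  · rintro ⟨n, rfl⟩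
    obtain ⟨s, hs⟩ := hrk
    refine ⟨((g ^ (s * n) : (ZMod p)ˣ) : ZMod p), Units.ne_zero _, ?_⟩
    rw [← huφ]
    push_cast [← Units.val_pow_eq_pow_val]
    congr 1
    rw [← hk, ← pow_mul, ← pow_mul, hs]
    ring_nf
  · rintro ⟨b, hb0, rfl⟩
    set v : (ZMod p)ˣ := (isUnit_iff_ne_zero.mpr hb0).unit with hv
    have hvb : (v : ZMod p) = b := IsUnit.unit_spec _
    obtain ⟨j, hj'⟩ := hg v
    have hj : g ^ j = v := hj'
    -- show v ^ r ∈ powers u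
    have key : v ^ r ∈ Submonoid.powers u := by
      rw [mem_powers_iff_mem_zpowers]
      rw [← hj, ← pow_mul]
      have hbez : (r : ℤ) = (p - 1 : ℕ) * Nat.gcdA (p - 1) k + k * Nat.gcdB (p - 1) k := by
        rw [hrd]; exact Nat.gcd_eq_gcd_ab _ _
      have : (g ^ (j * r) : (ZMod p)ˣ) = u ^ ((j : ℤ) * Nat.gcdB (p - 1) k) := by
        have h1 : (g ^ (j * r) : (ZMod p)ˣ) = g ^ ((j * r : ℕ) : ℤ) := by
          rw [zpow_natCast]
        rw [h1]
        push_cast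
        rw [hbez, mul_add]
        rw [zpow_add]
        have hg1 : (g : (ZMod p)ˣ) ^ ((j : ℤ) * ((p - 1 : ℕ) * Nat.gcdA (p - 1) k)) = 1 := by
          have : (j : ℤ) * ((p - 1 : ℕ) * Nat.gcdA (p - 1) k) =
              ((p - 1 : ℕ) : ℤ) * ((j : ℤ) * Nat.gcdA (p - 1) k) := by ring
          rw [this, zpow_mul, zpow_natCast, ← hgord, pow_orderOf_eq_one, one_zpow]
        rw [hg1, one_mul]
        have : (j : ℤ) * ((k : ℤ) * Nat.gcdB (p - 1) k) =
            (k : ℤ) * ((j : ℤ) * Nat.gcdB (p - 1) k) := by ring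
        rw [this, zpow_mul, zpow_natCast, hk]
      rw [this]
      exact zpow_mem (Subgroup.mem_zpowers u) _
    obtain ⟨n, hn'⟩ := key
    have hn : u ^ n = v ^ r := hn'
    refine ⟨n, ?_⟩
    rw [← huφ, ← hvb]
    push_cast [← Units.val_pow_eq_pow_val]
    rw [hn]
end

section
/- Let p ≠ 2, 5 be a prime number and let m be a natural number with m ∣ p − 1. If there exists a Fibonacci sequence in F_p with all terms nonzero whose minimal period is m, then p ≡ 1 or 4 (mod 5) and some root φ of x² − x − 1 in F_p has multiplicative order m in F_p^×. -/
open Polynomial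

private lemma fib_aux_exists_root (p : ℕ) [Fact p.Prime] (a : ℕ → ZMod p)
    (ha : ∀ n, a (n + 2) = a (n + 1) + a n) (h0 : a 0 ≠ 0)
    (hper : ∀ n, a (n + (p - 1)) = a n) : ∃ φ : ZMod p, φ ^ 2 = φ + 1 := by
  by_contra hno
  push_neg at hno
  have hp2' : 2 ≤ p := (Fact.out : p.Prime).two_le
  set f : (ZMod p)[X] := X ^ 2 - (X + C 1) with hf
  have hmonic : f.Monic := by
    apply monic_X_pow_sub
    rw [degree_X_add_C]
    exact_mod_cast Nat.one_lt_two
  have hdeg : f.natDegree = 2 := by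
    rw [hf]
    compute_degree!
  have hirr : Irreducible f := by
    rw [Polynomial.irreducible_iff_roots_eq_zero_of_degree_le_three
      (by rw [hdeg]) (by rw [hdeg]; norm_num)]
    rw [Multiset.eq_zero_iff_forall_notMem]
    intro r hr
    rw [mem_roots hmonic.ne_zero, IsRoot.def] at hr
    have : r ^ 2 - (r + 1) = 0 := by simpa [hf] using hr
    exact hno r (by linear_combination this)
  haveI : Fact (Irreducible f) := ⟨hirr⟩
  set K := AdjoinRoot f with hK
  set x : K := AdjoinRoot.root f with hx0
  set g : ZMod p →+* K := AdjoinRoot.of f with hg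
  have hginj : Function.Injective g := g.injective
  have hx : x ^ 2 = x + 1 := by
    have h0' := AdjoinRoot.eval₂_root f
    rw [hf] at h0'
    simp only [eval₂_sub, eval₂_add, eval₂_pow, eval₂_X, eval₂_C, map_one] at h0'
    have := sub_eq_zero.mp h0'
    simpa using this
  have hxne : ∀ c : ZMod p, x ≠ g c := by
    intro c hc
    apply hno c
    apply hginj
    rw [map_pow, map_add, map_one, ← hc, hx, hc]
  set z : K := g (a 0) + g (a 1) * x with hz
  have hz0 : z ≠ 0 := by
    intro hzz
    by_cases h1 : a 1 = 0
    · rw [hz, h1, map_zero, zero_mul, add_zero] at hzz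
      exact h0 (hginj (by rw [hzz, map_zero]))
    · apply hxne (-(a 0) / (a 1))
      have hga1 : g (a 1) ≠ 0 := fun hh => h1 (hginj (by rw [hh, map_zero]))
      rw [map_div₀, map_neg, eq_div_iff hga1]
      linear_combination hzz
  have hpow : ∀ n, x ^ n * z = g (a n) + g (a (n + 1)) * x := by
    intro n
    induction n with
    | zero => simp [hz]
    | succ n ih =>
      have e : x ^ (n + 1) * z = x * (x ^ n * z) := by ring
      rw [e, ih]
      show x * (g (a n) + g (a (n + 1)) * x) = g (a (n + 1)) + g (a (n + 2)) * x
      rw [ha n, map_add]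
      linear_combination (g (a (n + 1))) * hx
  have e0 : a (p - 1) = a 0 := by have := hper 0; rwa [zero_add] at this
  have e1 : a p = a 1 := by
    have := hper 1
    rwa [show 1 + (p - 1) = p by omega] at this
  have hz' : x ^ (p - 1) * z = z := by
    rw [hpow (p - 1), e0, show (p - 1) + 1 = p by omega, e1]
  have hx1 : x ^ (p - 1) = 1 := mul_right_cancel₀ hz0 (hz'.trans (one_mul z).symm)
  have hxp : x ^ p = x := by
    have hxp' : x ^ ((p - 1) + 1) = x := by rw [pow_succ, hx1, one_mul]
    rwa [show (p - 1) + 1 = p by omega] at hxp'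
  have hcard : Fintype.card (ZMod p) = p := ZMod.card p
  have hroots := FiniteField.roots_X_pow_card_sub_X (ZMod p)
  rw [hcard] at hroots
  have hmon2 : (X ^ p - X : (ZMod p)[X]).Monic := by
    apply monic_X_pow_sub
    rw [degree_X]
    exact_mod_cast by omega
  have hnd : (X ^ p - X : (ZMod p)[X]).natDegree = p :=
    FiniteField.X_pow_card_sub_X_natDegree_eq _ (by omega)
  have hprod : (Multiset.map (fun c => X - C c) (Finset.univ.val : Multiset (ZMod p))).prod
      = X ^ p - X := by
    rw [← hroots]
    exact Polynomial.prod_multiset_X_sub_C_of_monic_of_roots_card_eq hmon2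
      (by rw [hroots, hnd, ← Finset.card_def, Finset.card_univ, hcard])
  have heval : Polynomial.aeval x (X ^ p - X : (ZMod p)[X]) = 0 := by
    rw [map_sub, map_pow, aeval_X, hxp, sub_self]
  rw [← hprod, map_multiset_prod, Multiset.map_map, Multiset.prod_eq_zero_iff] at heval
  obtain ⟨c, _, hc0⟩ := Multiset.mem_map.mp heval
  apply hxne c
  have hsub : x - algebraMap (ZMod p) K c = 0 := by
    simpa [map_sub, aeval_X, aeval_C] using hc0
  rw [AdjoinRoot.algebraMap_eq] at hsub
  exact sub_eq_zero.mp hsub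

private lemma fib_aux_order (p m : ℕ) [Fact p.Prime] (a : ℕ → ZMod p) (φ : ZMod p)
    (hφ0 : φ ≠ 0) (h0 : a 0 ≠ 0) (hstep : ∀ n, a (n + 1) = φ * a n)
    (hmin : IsLeast {k : ℕ | 1 ≤ k ∧ ∀ n, a (n + k) = a n} m) : orderOf φ = m := by
  have hgen : ∀ n, a n = φ ^ n * a 0 := by
    intro n
    induction n with
    | zero => simp
    | succ n ih => rw [hstep n, ih, pow_succ]; ring
  have hiff : ∀ k, (∀ n, a (n + k) = a n) ↔ φ ^ k = 1 := by
    intro k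
    constructor
    · intro hk
      have h := hk 0
      rw [zero_add, hgen k] at h
      have h2 : (φ ^ k - 1) * a 0 = 0 := by linear_combination h
      rcases mul_eq_zero.mp h2 with h | h
      · exact sub_eq_zero.mp h
      · exact absurd h h0
    · intro hk n
      rw [hgen (n + k), hgen n, pow_add, hk]; ring
  have hfin : IsOfFinOrder φ := isOfFinOrder_iff_pow_eq_one.mpr
    ⟨p - 1, by have := (Fact.out : p.Prime).two_le; omega, ZMod.pow_card_sub_one_eq_one hφ0⟩
  obtain ⟨⟨hm1, hmp⟩, hlb⟩ := hmin
  apply le_antisymm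
  · exact orderOf_le_of_pow_eq_one (by omega) ((hiff m).mp hmp)
  · exact hlb ⟨hfin.orderOf_pos, (hiff _).mpr (pow_orderOf_eq_one φ)⟩

private lemma fib_gcd_two_of_odd (d : ℕ) (hd : Odd d) : d.gcd 2 = 1 := by
  have h1 : d.gcd 2 ∣ 2 := Nat.gcd_dvd_right d 2
  have h2 : ¬ 2 ∣ d := by
    have := Nat.odd_iff.mp hd
    omega
  rcases (Nat.dvd_prime Nat.prime_two).mp h1 with hh | hh
  · exact hh
  · exact absurd (hh ▸ Nat.gcd_dvd_left d 2) h2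

private lemma fib_aux_dvd (p : ℕ) [Fact p.Prime] (φ ψ : ZMod p) (hφ0 : φ ≠ 0) (hψ0 : ψ ≠ 0)
    (hmul : φ * ψ = -1) : orderOf φ ∣ orderOf ψ ∨ orderOf ψ ∣ orderOf φ := by
  set u : (ZMod p)ˣ := Units.mk0 φ hφ0 with hu0
  set w : (ZMod p)ˣ := Units.mk0 ψ hψ0 with hw0
  have hu : orderOf φ = orderOf u := by rw [← orderOf_units, hu0, Units.val_mk0]
  have hw : orderOf ψ = orderOf w := by rw [← orderOf_units, hw0, Units.val_mk0]
  have h1 : u ^ 2 * w ^ 2 = 1 := by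
    apply Units.ext
    show ((u ^ 2 * w ^ 2 : (ZMod p)ˣ) : ZMod p) = ((1 : (ZMod p)ˣ) : ZMod p)
    rw [Units.val_mul, Units.val_pow_eq_pow_val, Units.val_pow_eq_pow_val, Units.val_one,
      hu0, hw0, Units.val_mk0, Units.val_mk0]
    linear_combination (φ * ψ - 1) * hmul
  have hw2 : w ^ 2 = (u ^ 2)⁻¹ := by
    rw [eq_inv_iff_mul_eq_one, mul_comm]
    exact h1
  have hord : orderOf w / (orderOf w).gcd 2 = orderOf u / (orderOf u).gcd 2 := by
    rw [← orderOf_pow w, hw2, orderOf_inv, orderOf_pow u]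
  have hupos : 0 < orderOf u := orderOf_pos u
  have hwpos : 0 < orderOf w := orderOf_pos w
  have key : orderOf u ∣ orderOf w ∨ orderOf w ∣ orderOf u := by
    rcases Nat.even_or_odd (orderOf u) with hd | hd <;>
      rcases Nat.even_or_odd (orderOf w) with he | he
    · have h2d : (orderOf u).gcd 2 = 2 := by
        rw [Nat.gcd_comm]; exact Nat.gcd_eq_left hd.two_dvd
      have h2e : (orderOf w).gcd 2 = 2 := by
        rw [Nat.gcd_comm]; exact Nat.gcd_eq_left he.two_dvd
      rw [h2d, h2e] at hord
      have hdm := Nat.even_iff.mp hd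
      have hem := Nat.even_iff.mp he
      left
      have : orderOf u = orderOf w := by omega
      rw [this]
    · have h2d : (orderOf u).gcd 2 = 2 := by
        rw [Nat.gcd_comm]; exact Nat.gcd_eq_left hd.two_dvd
      have h2e : (orderOf w).gcd 2 = 1 := by
        exact fib_gcd_two_of_odd _ he
      rw [h2d, h2e] at hord
      have hdm := Nat.even_iff.mp hd
      right
      exact ⟨2, by omega⟩
    · have h2d : (orderOf u).gcd 2 = 1 := by
        exact fib_gcd_two_of_odd _ hd
      have h2e : (orderOf w).gcd 2 = 2 := by
        rw [Nat.gcd_comm]; exact Nat.gcd_eq_left he.two_dvd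
      rw [h2d, h2e] at hord
      have hem := Nat.even_iff.mp he
      left
      exact ⟨2, by omega⟩
    · have h2d : (orderOf u).gcd 2 = 1 := by
        exact fib_gcd_two_of_odd _ hd
      have h2e : (orderOf w).gcd 2 = 1 := by
        exact fib_gcd_two_of_odd _ he
      rw [h2d, h2e] at hord
      left
      have : orderOf u = orderOf w := by omega
      rw [this]
  rw [hu, hw]
  exact key

private lemma fib_ns2 : ¬ IsSquare (2 : ZMod 5) := by decide
private lemma fib_ns3 : ¬ IsSquare (3 : ZMod 5) := by decide

/-- If `p ≠ 2, 5` is prime, `m ∣ p - 1`, and there is a Fibonacci sequence over `F_p` with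
all terms nonzero and minimal period `m`, then `p ≡ 1, 4 (mod 5)` and some root `φ` of
`x² - x - 1` in `F_p` has multiplicative order `m`. -/
theorem root_order_of_fib_min_period (p : ℕ) [Fact p.Prime] (hp2 : p ≠ 2) (hp5 : p ≠ 5)
    (m : ℕ) (hm : m ∣ p - 1)
    (h : ∃ a : ℕ → ZMod p, (∀ n, a (n + 2) = a (n + 1) + a n) ∧ (∀ n, a n ≠ 0) ∧
      IsLeast {k : ℕ | 1 ≤ k ∧ ∀ n, a (n + k) = a n} m) :
    (p % 5 = 1 ∨ p % 5 = 4) ∧ ∃ φ : ZMod p, φ ^ 2 = φ + 1 ∧ orderOf φ = m := by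
  obtain ⟨a, ha, hnz, hmin⟩ := h
  obtain ⟨⟨hm1, hmp⟩, hlb⟩ := id hmin
  have hp : p.Prime := Fact.out
  obtain ⟨t, ht⟩ := hm
  have hperiodic : ∀ j n, a (n + j * m) = a n := by
    intro j
    induction j with
    | zero => simp
    | succ j ih =>
      intro n
      rw [show n + (j + 1) * m = (n + j * m) + m by ring, hmp (n + j * m), ih n]
  have hper : ∀ n, a (n + (p - 1)) = a n := by
    intro n
    rw [show p - 1 = t * m by rw [ht, Nat.mul_comm]]
    exact hperiodic t n
  obtain ⟨φ, hφ⟩ := fib_aux_exists_root p a ha (hnz 0) hper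
  have h5 : (5 : ZMod p) ≠ 0 := by
    intro h5'
    have h5'' : ((5 : ℕ) : ZMod p) = 0 := by exact_mod_cast h5'
    rw [ZMod.natCast_eq_zero_iff] at h5''
    exact hp5 ((Nat.prime_dvd_prime_iff_eq hp (by norm_num)).mp h5'')
  have hs : (2 * φ - 1) ^ 2 = 5 := by linear_combination 4 * hφ
  have hsq5 : IsSquare ((5 : ℕ) : ZMod p) := by
    refine ⟨2 * φ - 1, ?_⟩
    push_cast
    linear_combination -hs
  haveI : Fact (Nat.Prime 5) := ⟨by norm_num⟩
  have hmod : IsSquare ((p : ℕ) : ZMod 5) :=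
    (ZMod.exists_sq_eq_prime_iff_of_mod_four_eq_one (by norm_num) hp2).mpr hsq5
  have hp5mod : p % 5 = 1 ∨ p % 5 = 4 := by
    have hne : p % 5 ≠ 0 := by
      intro h0'
      exact hp5 (((Nat.prime_dvd_prime_iff_eq (by norm_num) hp).mp
        (Nat.dvd_of_mod_eq_zero h0')).symm)
    have hcast : ((p % 5 : ℕ) : ZMod 5) = ((p : ℕ) : ZMod 5) := ZMod.natCast_mod p 5
    have h4 : p % 5 < 5 := Nat.mod_lt _ (by norm_num)
    rcases (by omega : p % 5 = 1 ∨ p % 5 = 2 ∨ p % 5 = 3 ∨ p % 5 = 4) with hh | hh | hh | hh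
    · exact Or.inl hh
    · exfalso
      rw [hh] at hcast
      rw [← hcast, show ((2 : ℕ) : ZMod 5) = 2 by norm_num] at hmod
      exact absurd hmod fib_ns2
    · exfalso
      rw [hh] at hcast
      rw [← hcast, show ((3 : ℕ) : ZMod 5) = 3 by norm_num] at hmod
      exact absurd hmod fib_ns3
    · exact Or.inr hh
  set ψ : ZMod p := 1 - φ with hψdef
  have hψ : ψ ^ 2 = ψ + 1 := by rw [hψdef]; linear_combination hφ
  have hφ0 : φ ≠ 0 := by intro h0'; rw [h0'] at hφ; norm_num at hφ
  have hψ0 : ψ ≠ 0 := by intro h0'; rw [h0'] at hψ; norm_num at hψ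
  have hdiff : φ - ψ ≠ 0 := by
    intro hdd
    apply h5
    rw [show φ - ψ = 2 * φ - 1 by rw [hψdef]; ring] at hdd
    calc (5 : ZMod p) = (2 * φ - 1) ^ 2 := hs.symm
      _ = 0 := by rw [hdd]; ring
  have hmul : φ * ψ = -1 := by rw [hψdef]; linear_combination -hφ
  have hfinφ : IsOfFinOrder φ := isOfFinOrder_iff_pow_eq_one.mpr
    ⟨p - 1, by have := hp.two_le; omega, ZMod.pow_card_sub_one_eq_one hφ0⟩
  have hfinψ : IsOfFinOrder ψ := isOfFinOrder_iff_pow_eq_one.mpr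
    ⟨p - 1, by have := hp.two_le; omega, ZMod.pow_card_sub_one_eq_one hψ0⟩
  by_cases hgeomφ : a 1 = φ * a 0
  · have hstep : ∀ n, a (n + 1) = φ * a n := by
      intro n
      induction n with
      | zero => simpa using hgeomφ
      | succ n ih =>
        show a (n + 2) = φ * a (n + 1)
        rw [ha n, ih]
        linear_combination (-(a n)) * hφ
    exact ⟨hp5mod, φ, hφ, fib_aux_order p m a φ hφ0 (hnz 0) hstep hmin⟩
  by_cases hgeomψ : a 1 = ψ * a 0
  · have hstep : ∀ n, a (n + 1) = ψ * a n := by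
      intro n
      induction n with
      | zero => simpa using hgeomψ
      | succ n ih =>
        show a (n + 2) = ψ * a (n + 1)
        rw [ha n, ih]
        linear_combination (-(a n)) * hψ
    exact ⟨hp5mod, ψ, hψ, fib_aux_order p m a ψ hψ0 (hnz 0) hstep hmin⟩
  · set A : ZMod p := (a 1 - ψ * a 0) / (φ - ψ) with hA
    set B : ZMod p := (φ * a 0 - a 1) / (φ - ψ) with hB
    have hA0 : A ≠ 0 := by
      rw [hA, div_ne_zero_iff]
      exact ⟨fun hh => hgeomψ (by linear_combination hh), hdiff⟩
    have hB0 : B ≠ 0 := by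
      rw [hB, div_ne_zero_iff]
      exact ⟨fun hh => hgeomφ (by linear_combination -hh), hdiff⟩
    have hAB0 : A + B = a 0 := by
      rw [hA, hB]
      field_simp
      ring
    have hAB1 : A * φ + B * ψ = a 1 := by
      rw [hA, hB]
      field_simp
      ring
    have hgen : ∀ n, a n = A * φ ^ n + B * ψ ^ n := by
      have H : ∀ n, a n = A * φ ^ n + B * ψ ^ n ∧
          a (n + 1) = A * φ ^ (n + 1) + B * ψ ^ (n + 1) := by
        intro n
        induction n with
        | zero =>
          constructor
          · simpa using hAB0.symm
          · simpa using hAB1.symm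
        | succ n ih =>
          refine ⟨ih.2, ?_⟩
          show a (n + 2) = A * φ ^ (n + 2) + B * ψ ^ (n + 2)
          rw [ha n, ih.1, ih.2]
          linear_combination (-(A * φ ^ n)) * hφ + (-(B * ψ ^ n)) * hψ
      exact fun n => (H n).1
    have hiff : ∀ k, (∀ n, a (n + k) = a n) → (φ ^ k = 1 ∧ ψ ^ k = 1) := by
      intro k hk
      have e0 : A * φ ^ k + B * ψ ^ k = A + B := by
        have hh := hk 0
        rw [zero_add, hgen k, hgen 0] at hh
        simpa using hh
      have e1 : A * φ ^ (1 + k) + B * ψ ^ (1 + k) = A * φ + B * ψ := by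
        have hh := hk 1
        rw [hgen (1 + k), hgen 1] at hh
        simpa [pow_one] using hh
      have hφk : φ ^ k = 1 := by
        have h2 : A * (ψ - φ) * (φ ^ k - 1) = 0 := by
          linear_combination ψ * e0 - e1
        rcases mul_eq_zero.mp h2 with hh | hh
        · rcases mul_eq_zero.mp hh with hh' | hh'
          · exact absurd hh' hA0
          · exact absurd (by linear_combination -hh' : φ - ψ = 0) hdiff
        · exact sub_eq_zero.mp hh
      have hψk : ψ ^ k = 1 := by
        have h2 : B * (φ - ψ) * (ψ ^ k - 1) = 0 := by
          linear_combination φ * e0 - e1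
        rcases mul_eq_zero.mp h2 with hh | hh
        · rcases mul_eq_zero.mp hh with hh' | hh'
          · exact absurd hh' hB0
          · exact absurd hh' hdiff
        · exact sub_eq_zero.mp hh
      exact ⟨hφk, hψk⟩
    have hback : ∀ k, φ ^ k = 1 → ψ ^ k = 1 → (∀ n, a (n + k) = a n) := by
      intro k h1 h2 n
      rw [hgen (n + k), hgen n, pow_add, pow_add, h1, h2]
      ring
    obtain ⟨hφm, hψm⟩ := hiff m hmp
    rcases fib_aux_dvd p φ ψ hφ0 hψ0 hmul with hd | hd
    · refine ⟨hp5mod, ψ, hψ, le_antisymm (orderOf_le_of_pow_eq_one (by omega) hψm) ?_⟩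
      apply hlb
      exact ⟨hfinψ.orderOf_pos, hback _ (orderOf_dvd_iff_pow_eq_one.mp hd)
        (pow_orderOf_eq_one ψ)⟩
    · refine ⟨hp5mod, φ, hφ, le_antisymm (orderOf_le_of_pow_eq_one (by omega) hφm) ?_⟩
      apply hlb
      exact ⟨hfinφ.orderOf_pos, hback _ (pow_orderOf_eq_one φ)
        (orderOf_dvd_iff_pow_eq_one.mp hd)⟩
end

section
/- Let p be a prime, let φ and φ' be the two roots of x² − x − 1 in F_{p²} (so that φ' = −φ⁻¹), and set l = ord_{F_{p²}^×}(φ) and l' = ord_{F_{p²}^×}(φ'). Then either l = l', or l' = 2l, or l = 2l'. In particular, max(l, l') is either equal to min(l, l') or equal to 2·min(l, l'). -/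
/-!
If `u * v = -1` in a commutative monoid and `u ^ n = 1`, then `v ^ n = (-1) ^ n`, so `v ^ (2 * n) = 1`.
Hence each of the two orders divides twice the other, and two natural numbers with this property
are equal or differ by a factor of `2`.
-/

theorem Nat.eq_or_eq_two_mul_of_dvd_two_mul {n m : ℕ} (hn : n ∣ 2 * m) (hm : m ∣ 2 * n) :
    n = m ∨ m = 2 * n ∨ n = 2 * m := by
  obtain ⟨a, ha⟩ := hn
  obtain ⟨b, hb⟩ := hm
  rcases Nat.eq_zero_or_pos n with rfl | hn_pos
  · omega
  have hab : a * b = 4 := by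
    refine Nat.eq_of_mul_eq_mul_left hn_pos ?_
    rw [← mul_assoc, ← ha, mul_assoc, ← hb]
    ring
  have ha_le : a ≤ 4 := Nat.le_of_dvd (by norm_num) ⟨b, hab.symm⟩
  interval_cases a <;> omega

theorem orderOf_dvd_two_mul_orderOf_of_mul_eq_neg_one {M : Type*} [CommMonoid M] [HasDistribNeg M]
    {u v : M} (h : u * v = -1) : orderOf v ∣ 2 * orderOf u := by
  have hv : v ^ orderOf u = (-1) ^ orderOf u := by
    rw [← h, mul_pow, pow_orderOf_eq_one, one_mul]
  apply orderOf_dvd_of_pow_eq_one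
  rw [mul_comm, pow_mul, hv, ← pow_mul, mul_comm, pow_mul, neg_one_sq, one_pow]

theorem orders_of_golden_roots_general (K : Type*) [Field K] (φ φ' : K) (hprod : φ * φ' = -1) :
    (orderOf φ = orderOf φ' ∨ orderOf φ' = 2 * orderOf φ ∨ orderOf φ = 2 * orderOf φ')
    ∧ (max (orderOf φ) (orderOf φ') = min (orderOf φ) (orderOf φ')
       ∨ max (orderOf φ) (orderOf φ') = 2 * min (orderOf φ) (orderOf φ')) := by
  have key := Nat.eq_or_eq_two_mul_of_dvd_two_mul
    (orderOf_dvd_two_mul_orderOf_of_mul_eq_neg_one (by rwa [mul_comm] at hprod))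
    (orderOf_dvd_two_mul_orderOf_of_mul_eq_neg_one hprod)
  exact ⟨key, by omega⟩

/-- Let `p` be a prime and `φ, φ'` the two roots of `x² - x - 1` in `F_{p²}`
(so `φ · φ' = -1`, i.e. `φ' = -φ⁻¹`), with multiplicative orders `l, l'`. Then
`l = l'` or `l' = 2l` or `l = 2l'`; in particular `max l l'` equals either
`min l l'` or `2 · min l l'`. -/
theorem orders_of_golden_roots (p : ℕ) [Fact p.Prime]
    (K : Type*) [Field K] [Fintype K] (hK : Fintype.card K = p ^ 2)
    (φ φ' : K) (hφ : φ ^ 2 = φ + 1) (hφ' : φ' ^ 2 = φ' + 1) (hprod : φ * φ' = -1) :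
    (orderOf φ = orderOf φ' ∨ orderOf φ' = 2 * orderOf φ ∨ orderOf φ = 2 * orderOf φ')
    ∧ (max (orderOf φ) (orderOf φ') = min (orderOf φ) (orderOf φ')
       ∨ max (orderOf φ) (orderOf φ') = 2 * min (orderOf φ) (orderOf φ')) :=
  orders_of_golden_roots_general K φ φ' hprod
end

section
/- Let p ≠ 2, 5 be a prime, let φ and φ' be the two roots of x² − x − 1 in F_{p²}, and set M₁ = max(ord_{F_{p²}^×}(φ), ord_{F_{p²}^×}(φ')). Then the matrix A = [[0,1],[1,1]] over F_p satisfies A^{M₁} = Id; consequently every Fibonacci sequence (a_n) in F_p satisfies a_{n+M₁} = a_n for all n. -/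
private lemma aux_dvd_max {m m' : ℕ} (hm : 0 < m) (hm' : 0 < m')
    (h1 : m ∣ 2 * m') (h2 : m' ∣ 2 * m) :
    m ∣ max m m' ∧ m' ∣ max m m' := by
  rcases le_total m m' with h | h
  · rw [max_eq_right h]
    refine ⟨?_, dvd_refl _⟩
    obtain ⟨c, hc⟩ := h2
    have hc2 : c ≤ 2 := by nlinarith
    have hc1 : 1 ≤ c := by nlinarith
    interval_cases c
    · exact ⟨2, by omega⟩
    · have : m = m' := by omega
      exact this ▸ dvd_refl _
  · rw [max_eq_left h]
    refine ⟨dvd_refl _, ?_⟩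
    obtain ⟨c, hc⟩ := h1
    have hc2 : c ≤ 2 := by nlinarith
    have hc1 : 1 ≤ c := by nlinarith
    interval_cases c
    · exact ⟨2, by omega⟩
    · have : m' = m := by omega
      exact this ▸ dvd_refl _

/-- For a prime `p ≠ 2, 5`, with `φ, φ'` the two roots of `x² - x - 1` in `F_{p²}` and
`M₁ = max (ord φ) (ord φ')`, the matrix `A = [[0,1],[1,1]]` over `F_p` satisfies
`A ^ M₁ = 1`; consequently every Fibonacci sequence over `F_p` is `M₁`-periodic. -/
theorem fib_matrix_pow_max_order (p : ℕ) [Fact p.Prime] (hp2 : p ≠ 2) (hp5 : p ≠ 5)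
    (K : Type*) [Field K] [Fintype K] (hK : Fintype.card K = p ^ 2)
    (φ φ' : K) (hφ : φ ^ 2 = φ + 1) (hφ' : φ' ^ 2 = φ' + 1) (hne : φ ≠ φ') :
    (!![0, 1; 1, 1] : Matrix (Fin 2) (Fin 2) (ZMod p)) ^ max (orderOf φ) (orderOf φ') = 1
    ∧ ∀ a : ℕ → ZMod p, (∀ n, a (n + 2) = a (n + 1) + a n) →
        ∀ n, a (n + max (orderOf φ) (orderOf φ')) = a n := by
  have hpp : p.Prime := Fact.out
  -- characteristic of K is p
  haveI : CharP K (ringChar K) := ringChar.charP K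
  obtain ⟨n, hq, hcard⟩ := FiniteField.card K (ringChar K)
  have hqp : ringChar K = p := by
    have hd : p ∣ ringChar K ^ (n : ℕ) := by
      rw [← hcard, hK]; exact dvd_pow_self p (by norm_num)
    have := hpp.dvd_of_dvd_pow hd
    exact ((Nat.prime_dvd_prime_iff_eq hpp hq).mp this).symm
  haveI hcharK : CharP K p := hqp ▸ ringChar.charP K
  set M := max (orderOf φ) (orderOf φ') with hM
  -- basic facts about φ, φ'
  have hφ0 : φ ≠ 0 := by
    intro h; rw [h] at hφ; simp at hφ
  have hφ'0 : φ' ≠ 0 := by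
    intro h; rw [h] at hφ'; simp at hφ'
  have hsub : φ - φ' ≠ 0 := sub_ne_zero.mpr hne
  have hsum : φ + φ' = 1 := by
    have h1 : (φ - φ') * (φ + φ' - 1) = 0 := by linear_combination hφ - hφ'
    rcases mul_eq_zero.mp h1 with h | h
    · exact absurd h hsub
    · linear_combination h
  have hprod : φ * φ' = -1 := by linear_combination φ * hsum - hφ
  -- orders
  have hfin : ∀ x : K, x ≠ 0 → 0 < orderOf x := by
    intro x hx
    refine orderOf_pos_iff.mpr (isOfFinOrder_iff_pow_eq_one.mpr ⟨Fintype.card K - 1, ?_, ?_⟩)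
    · have : 2 ≤ Fintype.card K := Fintype.one_lt_card
      omega
    · exact FiniteField.pow_card_sub_one_eq_one x hx
  have hm : 0 < orderOf φ := hfin φ hφ0
  have hm' : 0 < orderOf φ' := hfin φ' hφ'0
  have hsq : φ ^ 2 * φ' ^ 2 = 1 := by
    have : (φ * φ') ^ 2 = 1 := by rw [hprod]; ring
    linear_combination this
  have hd1 : orderOf φ ∣ 2 * orderOf φ' := by
    apply orderOf_dvd_of_pow_eq_one
    calc φ ^ (2 * orderOf φ') = φ ^ (2 * orderOf φ') * (φ' ^ orderOf φ') ^ 2 := by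
          rw [pow_orderOf_eq_one, one_pow, mul_one]
      _ = (φ ^ 2 * φ' ^ 2) ^ orderOf φ' := by ring
      _ = 1 := by rw [hsq, one_pow]
  have hd2 : orderOf φ' ∣ 2 * orderOf φ := by
    apply orderOf_dvd_of_pow_eq_one
    calc φ' ^ (2 * orderOf φ) = φ' ^ (2 * orderOf φ) * (φ ^ orderOf φ) ^ 2 := by
          rw [pow_orderOf_eq_one, one_pow, mul_one]
      _ = (φ ^ 2 * φ' ^ 2) ^ orderOf φ := by ring
      _ = 1 := by rw [hsq, one_pow]
  obtain ⟨hdM, hdM'⟩ := aux_dvd_max hm hm' hd1 hd2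
  have hφM : φ ^ M = 1 := orderOf_dvd_iff_pow_eq_one.mp hdM
  have hφ'M : φ' ^ M = 1 := orderOf_dvd_iff_pow_eq_one.mp hdM'
  -- diagonalization over K
  set A' : Matrix (Fin 2) (Fin 2) K := !![0, 1; 1, 1] with hA'
  set P : Matrix (Fin 2) (Fin 2) K := !![1, 1; φ, φ'] with hP
  set D : Matrix (Fin 2) (Fin 2) K := Matrix.diagonal ![φ, φ'] with hD
  have hAP : A' * P = P * D := by
    ext i j
    fin_cases i <;> fin_cases j <;>
      simp [hA', hP, hD, Matrix.mul_apply, Fin.sum_univ_two, Matrix.diagonal]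
    · linear_combination -hφ
    · linear_combination -hφ'
  have hAP' : A' * P = P * D := hAP
  have hpow : ∀ k : ℕ, A' ^ k * P = P * D ^ k := by
    intro k
    induction k with
    | zero => simp
    | succ k ih =>
      rw [pow_succ, pow_succ, mul_assoc, hAP, ← mul_assoc, ih, mul_assoc]
  have hDM : D ^ M = 1 := by
    rw [hD, Matrix.diagonal_pow]
    have : (![φ, φ'] : Fin 2 → K) ^ M = 1 := by
      funext i
      fin_cases i <;> simp [hφM, hφ'M]
    rw [this]
    exact Matrix.diagonal_one
  have hdetP : IsUnit P.det := by
    have : P.det = φ' - φ := by simp [hP, Matrix.det_fin_two_of]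
    rw [this]
    exact (sub_ne_zero.mpr (Ne.symm hne)).isUnit
  have hA'M : A' ^ M = 1 := by
    have h1 : A' ^ M * P = P := by rw [hpow, hDM, mul_one]
    calc A' ^ M = A' ^ M * (P * P⁻¹) := by rw [Matrix.mul_nonsing_inv P hdetP, mul_one]
      _ = (A' ^ M * P) * P⁻¹ := by rw [mul_assoc]
      _ = P * P⁻¹ := by rw [h1]
      _ = 1 := Matrix.mul_nonsing_inv P hdetP
  -- descend to ZMod p
  set f : ZMod p →+* K := ZMod.castHom (dvd_refl p) K with hf
  have hfinj : Function.Injective f := f.injective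
  have hmapA : (!![0, 1; 1, 1] : Matrix (Fin 2) (Fin 2) (ZMod p)).map f = A' := by
    ext i j
    fin_cases i <;> fin_cases j <;> simp [hA']
  have hAM : (!![0, 1; 1, 1] : Matrix (Fin 2) (Fin 2) (ZMod p)) ^ M = 1 := by
    have hmm : (f.mapMatrix) ((!![0, 1; 1, 1] : Matrix (Fin 2) (Fin 2) (ZMod p)) ^ M)
        = (f.mapMatrix) (1 : Matrix (Fin 2) (Fin 2) (ZMod p)) := by
      rw [map_pow, map_one]
      have h2 : (f.mapMatrix) (!![0, 1; 1, 1] : Matrix (Fin 2) (Fin 2) (ZMod p)) = A' := hmapA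
      rw [h2, hA'M]
    exact Matrix.map_injective hfinj hmm
  refine ⟨hAM, ?_⟩
  -- periodicity
  intro a ha n
  have key : ∀ k m : ℕ,
      ((!![0, 1; 1, 1] : Matrix (Fin 2) (Fin 2) (ZMod p)) ^ k).mulVec ![a m, a (m + 1)]
        = ![a (m + k), a (m + k + 1)] := by
    intro k
    induction k with
    | zero => intro m; simp
    | succ k ih =>
      intro m
      have hstep : (!![0, 1; 1, 1] : Matrix (Fin 2) (Fin 2) (ZMod p)).mulVec
          ![a m, a (m + 1)] = ![a (m + 1), a (m + 1 + 1)] := by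
        funext i
        fin_cases i <;>
          simp [Matrix.mulVec, dotProduct, Fin.sum_univ_two]
        rw [show m + 1 + 1 = m + 2 by ring, ha m]
        ring
      rw [pow_succ, ← Matrix.mulVec_mulVec, hstep, ih (m + 1),
        show m + 1 + k = m + (k + 1) from by omega]
  have := key M n
  rw [hAM, Matrix.one_mulVec] at this
  have h0 := congrFun this 0
  simpa using h0.symm
end

section
/- Let p ≠ 2, 5 be a prime and let φ, φ' be the two roots of x² − x − 1 in F_{p²}. If (a_n) is a Fibonacci sequence in F_p with (a_1, a_2) ≠ (0, 0) and a_{n+m} = a_n for all n (for some m ≥ 1), then φ^m = 1 or φ'^m = 1. -/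
/-- For a prime `p ≠ 2, 5`, with `φ, φ'` the two roots of `x² - x - 1` in `F_{p²}`:
if a Fibonacci sequence over `F_p` with `(a₁, a₂) ≠ (0, 0)` is `m`-periodic for some
`m ≥ 1`, then `φ ^ m = 1` or `φ' ^ m = 1`. -/
theorem root_pow_period_eq_one (p : ℕ) [Fact p.Prime] (hp2 : p ≠ 2) (hp5 : p ≠ 5)
    (K : Type*) [Field K] [Fintype K] (hK : Fintype.card K = p ^ 2)
    (φ φ' : K) (hφ : φ ^ 2 = φ + 1) (hφ' : φ' ^ 2 = φ' + 1) (hne : φ ≠ φ')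
    (a : ℕ → ZMod p) (hfib : ∀ n, a (n + 2) = a (n + 1) + a n)
    (h0 : ¬(a 0 = 0 ∧ a 1 = 0)) (m : ℕ) (hm : 1 ≤ m)
    (hper : ∀ n, a (n + m) = a n) :
    φ ^ m = 1 ∨ φ' ^ m = 1 := by
  -- characteristic of K is p
  obtain ⟨q, hq⟩ := CharP.exists K
  haveI := hq
  have hqp : q.Prime := CharP.char_is_prime K q
  obtain ⟨n, hn⟩ := FiniteField.card K q
  have hqdvd : q ∣ p ^ 2 := by
    rw [← hK, hn.2]
    exact dvd_pow_self q n.2.ne'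
  have hq_eq : q = p := by
    have := hqp.dvd_of_dvd_pow hqdvd
    exact ((Nat.prime_dvd_prime_iff_eq hqp (Fact.out)).mp this)
  haveI hcp : CharP K p := hq_eq ▸ hq
  have f : ZMod p →+* K := ZMod.castHom (dvd_refl p) K
  have hf : Function.Injective f := f.injective
  set D := φ - φ' with hD
  have hDne : D ≠ 0 := sub_ne_zero.mpr hne
  set c : K := (f (a 1) - φ' * f (a 0)) / D with hc
  set d : K := (φ * f (a 0) - f (a 1)) / D with hd
  have key : ∀ n, f (a n) = c * φ ^ n + d * φ' ^ n
      ∧ f (a (n + 1)) = c * φ ^ (n + 1) + d * φ' ^ (n + 1) := by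
    intro n
    induction n with
    | zero =>
      constructor
      · rw [hc, hd]; field_simp; ring
      · rw [hc, hd]; field_simp; ring
    | succ k ih =>
      refine ⟨ih.2, ?_⟩
      have e1 : φ ^ (k + 2) = φ ^ (k + 1) + φ ^ k := by
        rw [pow_add, hφ, pow_add, pow_one]; ring
      have e2 : φ' ^ (k + 2) = φ' ^ (k + 1) + φ' ^ k := by
        rw [pow_add, hφ', pow_add, pow_one]; ring
      rw [hfib, map_add, ih.1, ih.2, e1, e2]; ring
  have hpn : ∀ n, c * φ ^ n * (φ ^ m - 1) + d * φ' ^ n * (φ' ^ m - 1) = 0 := by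
    intro n
    have h1 := (key (n + m)).1
    have h2 := (key n).1
    rw [hper n, h2, pow_add, pow_add] at h1
    linear_combination -h1
  by_contra hcon
  push_neg at hcon
  obtain ⟨hm1, hm2⟩ := hcon
  have h0' := hpn 0
  have h1' := hpn 1
  simp only [pow_zero, pow_one, mul_one] at h0' h1'
  have hu : c * (φ ^ m - 1) = 0 := by
    have : c * (φ ^ m - 1) * (φ - φ') = 0 := by linear_combination h1' - φ' * h0'
    rcases mul_eq_zero.mp this with h | h
    · exact h
    · exact absurd h (sub_ne_zero.mpr hne)
  have hv : d * (φ' ^ m - 1) = 0 := by linear_combination h0' - hu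
  have hc0 : c = 0 := by
    rcases mul_eq_zero.mp hu with h | h
    · exact h
    · exact absurd (by linear_combination h) hm1
  have hd0 : d = 0 := by
    rcases mul_eq_zero.mp hv with h | h
    · exact h
    · exact absurd (by linear_combination h) hm2
  apply h0
  have ha0 : f (a 0) = 0 := by
    have := (key 0).1; simpa [hc0, hd0] using this
  have ha1 : f (a 1) = 0 := by
    have := (key 1).1; simpa [hc0, hd0] using this
  exact ⟨hf (by simpa using ha0), hf (by simpa using ha1)⟩
end

section
/- Let p ≠ 2, 5 be a prime and let φ, φ' be the two roots of x² − x − 1 in F_{p²}. If (a_n) is a Fibonacci sequence in F_p with all terms nonzero and with minimal period m, then m = ord_{F_{p²}^×}(φ) or m = ord_{F_{p²}^×}(φ'). -/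
private lemma aux_dvd_or_dvd {e e' : ℕ} (he : 0 < e) (he' : 0 < e')
    (h1 : e ∣ 2 * e') (h2 : e' ∣ 2 * e) : e ∣ e' ∨ e' ∣ e := by
  have hgpos : 0 < Nat.gcd e e' := Nat.gcd_pos_of_pos_left _ he
  obtain ⟨g, A, B, hg0, cop, rfl, rfl⟩ := Nat.exists_coprime' hgpos
  have h1' : A ∣ 2 * B := by
    have : A * g ∣ (2 * B) * g := by
      calc A * g ∣ 2 * (B * g) := h1
        _ = (2 * B) * g := by ring
    exact (Nat.mul_dvd_mul_iff_right hg0).mp this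
  have h2' : B ∣ 2 * A := by
    have : B * g ∣ (2 * A) * g := by
      calc B * g ∣ 2 * (A * g) := h2
        _ = (2 * A) * g := by ring
    exact (Nat.mul_dvd_mul_iff_right hg0).mp this
  have hA2 : A ∣ 2 := cop.dvd_of_dvd_mul_right h1'
  have hB2 : B ∣ 2 := cop.symm.dvd_of_dvd_mul_right h2'
  have hA12 : A = 1 ∨ A = 2 := (Nat.dvd_prime Nat.prime_two).mp hA2
  have hB12 : B = 1 ∨ B = 2 := (Nat.dvd_prime Nat.prime_two).mp hB2
  rcases hA12 with rfl | rfl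
  · left; exact ⟨B, by ring⟩
  · rcases hB12 with rfl | rfl
    · right; exact ⟨2, by ring⟩
    · exact absurd cop (by decide)

/-- For a prime `p ≠ 2, 5`, with `φ, φ'` the two roots of `x² - x - 1` in `F_{p²}`:
if a Fibonacci sequence over `F_p` has all terms nonzero and minimal period `m`, then
`m = ord φ` or `m = ord φ'`. -/
theorem min_period_eq_order_of_root (p : ℕ) [Fact p.Prime] (hp2 : p ≠ 2) (hp5 : p ≠ 5)
    (K : Type*) [Field K] [Fintype K] (hK : Fintype.card K = p ^ 2)
    (φ φ' : K) (hφ : φ ^ 2 = φ + 1) (hφ' : φ' ^ 2 = φ' + 1) (hne : φ ≠ φ')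
    (a : ℕ → ZMod p) (hfib : ∀ n, a (n + 2) = a (n + 1) + a n)
    (hnz : ∀ n, a n ≠ 0) (m : ℕ)
    (hmin : IsLeast {k : ℕ | 1 ≤ k ∧ ∀ n, a (n + k) = a n} m) :
    m = orderOf φ ∨ m = orderOf φ' := by
  have pp : p.Prime := Fact.out
  -- characteristic of K is p
  haveI : CharP K (ringChar K) := ringChar.charP K
  obtain ⟨n, hqprime, hn⟩ := FiniteField.card K (ringChar K)
  have hpq : p = ringChar K := by
    have hdvd : p ∣ ringChar K ^ (n : ℕ) := by
      rw [← hn, hK]; exact dvd_pow_self p (by norm_num)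
    exact ((Nat.prime_dvd_prime_iff_eq pp hqprime).mp (pp.dvd_of_dvd_pow hdvd))
  haveI : CharP K p := ringChar.of_eq hpq.symm
  set f : ZMod p →+* K := ZMod.castHom dvd_rfl K with hf
  have hbnz : ∀ n, f (a n) ≠ 0 := fun n h => hnz n (f.injective (by simpa using h))
  -- basic facts about φ, φ'
  have hd : φ - φ' ≠ 0 := sub_ne_zero.mpr hne
  have hsum : φ + φ' = 1 := by
    have h0 : (φ - φ') * (φ + φ' - 1) = 0 := by linear_combination hφ - hφ'
    rcases mul_eq_zero.mp h0 with h | h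
    · exact absurd h hd
    · linear_combination h
  have hprod : φ * φ' = -1 := by linear_combination φ * hsum - hφ
  have hφ0 : φ ≠ 0 := fun h => by simp [h] at hprod
  have hφ'0 : φ' ≠ 0 := fun h => by simp [h] at hprod
  -- finite order
  have hcard1 : 0 < Fintype.card K - 1 := by
    have : 1 < Fintype.card K := Fintype.one_lt_card
    omega
  have hfo : ∀ x : K, x ≠ 0 → IsOfFinOrder x := fun x hx =>
    isOfFinOrder_iff_pow_eq_one.mpr
      ⟨Fintype.card K - 1, hcard1, FiniteField.pow_card_sub_one_eq_one x hx⟩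
  have hordφ : 0 < orderOf φ := (hfo φ hφ0).orderOf_pos
  have hordφ' : 0 < orderOf φ' := (hfo φ' hφ'0).orderOf_pos
  -- representation a_n = A φ^n + B φ'^n
  obtain ⟨A, B, h0, h1⟩ : ∃ A B : K, f (a 0) = A + B ∧ f (a 1) = A * φ + B * φ' := by
    refine ⟨(f (a 1) - φ' * f (a 0)) / (φ - φ'), (φ * f (a 0) - f (a 1)) / (φ - φ'), ?_, ?_⟩ <;>
      field_simp <;> ring
  have hrep : ∀ n, f (a n) = A * φ ^ n + B * φ' ^ n := by
    intro n
    induction n using Nat.twoStepInduction with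
    | zero => simpa using h0
    | one => simpa using h1
    | more n ih1 ih2 =>
      have hb : f (a (n + 2)) = f (a (n + 1)) + f (a n) := by
        rw [hfib n]; exact map_add f _ _
      rw [hb, ih1, ih2]
      have e1 : φ ^ (n + 2) = φ ^ (n + 1) + φ ^ n := by
        have : φ ^ (n + 2) = φ ^ n * φ ^ 2 := by ring
        rw [this, hφ]; ring
      have e2 : φ' ^ (n + 2) = φ' ^ (n + 1) + φ' ^ n := by
        have : φ' ^ (n + 2) = φ' ^ n * φ' ^ 2 := by ring
        rw [this, hφ']; ring
      rw [e1, e2]; ring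
  -- membership characterization
  have hper : ∀ k : ℕ, (∀ n, a (n + k) = a n) ↔ (∀ n, f (a (n + k)) = f (a n)) := by
    intro k
    constructor
    · intro h n; rw [h n]
    · intro h n; exact f.injective (h n)
  by_cases hA : A = 0
  · -- a_n = B φ'^n, minimal period = ord φ'
    right
    have hB : B ≠ 0 := by
      intro hB
      apply hbnz 0
      rw [hrep 0, hA, hB]; ring
    have hchar : ∀ k : ℕ, (∀ n, a (n + k) = a n) ↔ φ' ^ k = 1 := by
      intro k
      rw [hper]
      constructor
      · intro h
        have hk := h 0
        rw [hrep, hrep, hA] at hk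
        simp only [zero_mul, zero_add, pow_zero, mul_one] at hk
        exact mul_left_cancel₀ hB (by rw [mul_one]; exact hk)
      · intro h n
        rw [hrep, hrep, hA, pow_add φ' n k, h]
        ring
    have hm1 : φ' ^ m = 1 := (hchar m).mp hmin.1.2
    have hle : orderOf φ' ≤ m := orderOf_le_of_pow_eq_one hmin.1.1 hm1
    have hge : m ≤ orderOf φ' :=
      hmin.2 ⟨hordφ', (hchar _).mpr (pow_orderOf_eq_one φ')⟩
    omega
  · by_cases hB : B = 0
    · -- symmetric: minimal period = ord φ
      left
      have hchar : ∀ k : ℕ, (∀ n, a (n + k) = a n) ↔ φ ^ k = 1 := by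
        intro k
        rw [hper]
        constructor
        · intro h
          have hk := h 0
          rw [hrep, hrep, hB] at hk
          simp only [zero_mul, add_zero, zero_add, pow_zero, mul_one] at hk
          exact mul_left_cancel₀ hA (by rw [mul_one]; exact hk)
        · intro h n
          rw [hrep, hrep, hB, pow_add φ n k, h]
          ring
      have hm1 : φ ^ m = 1 := (hchar m).mp hmin.1.2
      have hle : orderOf φ ≤ m := orderOf_le_of_pow_eq_one hmin.1.1 hm1
      have hge : m ≤ orderOf φ :=
        hmin.2 ⟨hordφ, (hchar _).mpr (pow_orderOf_eq_one φ)⟩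
      omega
    · -- both nonzero: minimal period = lcm (ord φ) (ord φ') = ord φ or ord φ'
      have hchar : ∀ k : ℕ, (∀ n, a (n + k) = a n) ↔ (φ ^ k = 1 ∧ φ' ^ k = 1) := by
        intro k
        rw [hper]
        constructor
        · intro h
          have h00 := h 0
          have h11 := h 1
          rw [hrep, hrep] at h00
          rw [hrep, hrep] at h11
          simp only [zero_add, pow_zero, mul_one] at h00
          have h11' : A * φ ^ (1 + k) + B * φ' ^ (1 + k) = A * φ ^ 1 + B * φ' ^ 1 := h11
          set u := A * (φ ^ k - 1) with hu
          set v := B * (φ' ^ k - 1) with hv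
          have e1 : u + v = 0 := by
            rw [hu, hv]; linear_combination h00
          have e2 : u * φ + v * φ' = 0 := by
            rw [hu, hv]
            linear_combination h11'
          have hu0 : u = 0 := by
            have : u * (φ - φ') = 0 := by linear_combination e2 - φ' * e1
            rcases mul_eq_zero.mp this with h | h
            · exact h
            · exact absurd h hd
          have hv0 : v = 0 := by linear_combination e1 - hu0
          constructor
          · rcases mul_eq_zero.mp hu0 with h | h
            · exact absurd h hA
            · linear_combination h
          · rcases mul_eq_zero.mp hv0 with h | h
            · exact absurd h hB
            · linear_combination h
        · rintro ⟨h1, h2⟩ n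
          rw [hrep, hrep, pow_add, pow_add, h1, h2]
          ring
      -- m = lcm (ord φ) (ord φ')
      obtain ⟨hmφ, hmφ'⟩ := (hchar m).mp hmin.1.2
      have hd1 : orderOf φ ∣ m := orderOf_dvd_of_pow_eq_one hmφ
      have hd2 : orderOf φ' ∣ m := orderOf_dvd_of_pow_eq_one hmφ'
      set e := orderOf φ
      set e' := orderOf φ'
      have hlcm_pos : 0 < Nat.lcm e e' := Nat.lcm_pos hordφ hordφ'
      have hlcm_mem : Nat.lcm e e' ∈ {k : ℕ | 1 ≤ k ∧ ∀ n, a (n + k) = a n} := by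
        refine ⟨hlcm_pos, (hchar _).mpr ⟨?_, ?_⟩⟩
        · exact orderOf_dvd_iff_pow_eq_one.mp (Nat.dvd_lcm_left e e')
        · exact orderOf_dvd_iff_pow_eq_one.mp (Nat.dvd_lcm_right e e')
      have hmle : m ≤ Nat.lcm e e' := hmin.2 hlcm_mem
      have hlcm_dvd : Nat.lcm e e' ∣ m := Nat.lcm_dvd hd1 hd2
      have hm_pos : 0 < m := hmin.1.1
      have hmeq : m = Nat.lcm e e' := le_antisymm hmle (Nat.le_of_dvd hm_pos hlcm_dvd)
      -- e ∣ 2e' and e' ∣ 2e using φ φ' = -1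
      have hpp1 : (φ * φ') ^ (2 * e') = 1 := by rw [hprod, pow_mul]; norm_num
      have hpp2 : (φ * φ') ^ (2 * e) = 1 := by rw [hprod, pow_mul]; norm_num
      have hφ'2e' : φ' ^ (2 * e') = 1 := by
        rw [mul_comm, pow_mul, pow_orderOf_eq_one, one_pow]
      have hφ2e : φ ^ (2 * e) = 1 := by
        rw [mul_comm, pow_mul, pow_orderOf_eq_one, one_pow]
      have he2 : e ∣ 2 * e' := by
        apply orderOf_dvd_of_pow_eq_one
        calc φ ^ (2 * e') = φ ^ (2 * e') * φ' ^ (2 * e') := by rw [hφ'2e', mul_one]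
          _ = (φ * φ') ^ (2 * e') := (mul_pow _ _ _).symm
          _ = 1 := hpp1
      have he'2 : e' ∣ 2 * e := by
        apply orderOf_dvd_of_pow_eq_one
        calc φ' ^ (2 * e) = φ ^ (2 * e) * φ' ^ (2 * e) := by rw [hφ2e, one_mul]
          _ = (φ * φ') ^ (2 * e) := (mul_pow _ _ _).symm
          _ = 1 := hpp2
      rcases aux_dvd_or_dvd hordφ hordφ' he2 he'2 with h | h
      · right
        rw [hmeq]
        exact Nat.dvd_antisymm (Nat.lcm_dvd h dvd_rfl) (Nat.dvd_lcm_right e e')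
      · left
        rw [hmeq]
        exact Nat.dvd_antisymm (Nat.lcm_dvd dvd_rfl h) (Nat.dvd_lcm_left e e')
end

section
/- Let p ≠ 2 be a prime and let φ, φ' be the two roots of x² − x − 1 in F_{p²} (so that φ' = −φ⁻¹). If ord_{F_{p²}^×}(φ) = ord_{F_{p²}^×}(φ'), then 4 divides ord_{F_{p²}^×}(φ). -/
lemma orderOf_inv_gwz {K : Type*} [GroupWithZero K] (a : K) :
    orderOf a⁻¹ = orderOf a := by
  have h : ∀ b : K, orderOf b⁻¹ ∣ orderOf b := fun b =>
    orderOf_dvd_of_pow_eq_one (by rw [inv_pow, pow_orderOf_eq_one, inv_one])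
  exact Nat.dvd_antisymm (h a) (by simpa using h a⁻¹)

/-- Let `p ≠ 2` be a prime and `φ, φ'` the two roots of `x² - x - 1` in `F_{p²}`
(so `φ' = -φ⁻¹`). If `ord φ = ord φ'`, then `4 ∣ ord φ`. -/
theorem four_dvd_order_of_equal_orders (p : ℕ) [Fact p.Prime] (hp2 : p ≠ 2)
    (K : Type*) [Field K] [Fintype K] (hK : Fintype.card K = p ^ 2)
    (φ φ' : K) (hφ : φ ^ 2 = φ + 1) (hφ' : φ' ^ 2 = φ' + 1) (hinv : φ' = -φ⁻¹)
    (hord : orderOf φ = orderOf φ') :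
    4 ∣ orderOf φ := by
  have hp : p.Prime := Fact.out
  have hφ0 : φ ≠ 0 := by rintro rfl; simp at hφ
  -- -1 ≠ 1 in K
  have hneg : (-1 : K) ≠ 1 := by
    intro h
    have h2 : (2 : ℕ) • (1 : K) = 0 := by
      push_cast
      linear_combination -h
    have hdvd2 : addOrderOf (1 : K) ∣ 2 := addOrderOf_dvd_of_nsmul_eq_zero h2
    have hdvdc : addOrderOf (1 : K) ∣ p ^ 2 := hK ▸ addOrderOf_dvd_card
    have hne1 : addOrderOf (1 : K) ≠ 1 := by
      simp [AddMonoid.addOrderOf_eq_one_iff]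
    have heq2 : addOrderOf (1 : K) = 2 := by
      rcases (Nat.dvd_prime Nat.prime_two).mp hdvd2 with h | h
      · exact absurd h hne1
      · exact h
    rw [heq2] at hdvdc
    have := Nat.Prime.dvd_of_dvd_pow Nat.prime_two hdvdc
    exact hp2 ((Nat.prime_dvd_prime_iff_eq Nat.prime_two hp).mp this).symm
  -- φ has finite positive order
  have hcard : 1 < Fintype.card K := Fintype.one_lt_card
  have hfo : IsOfFinOrder φ := by
    refine isOfFinOrder_iff_pow_eq_one.mpr ⟨Fintype.card K - 1, by omega, ?_⟩
    exact FiniteField.pow_card_sub_one_eq_one φ hφ0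
  have hn : 0 < orderOf φ := hfo.orderOf_pos
  -- orderOf (-φ) = orderOf φ
  have hord' : orderOf (-φ) = orderOf φ := by
    rw [hinv] at hord
    rw [hord, neg_inv, orderOf_inv_gwz]
  set n := orderOf φ with hndef
  by_contra h4
  rcases Nat.even_or_odd n with he | ho
  · -- n even, so n = 2 * m with m odd
    obtain ⟨m, hm⟩ := he
    have hmn : n = 2 * m := by omega
    have hmodd : ¬ (2 ∣ m) := fun ⟨k, hk⟩ => h4 ⟨k, by omega⟩
    have hm0 : 0 < m := by omega
    have hmlt : m < n := by omega
    have hpm1 : φ ^ m ≠ 1 := pow_ne_one_of_lt_orderOf (by omega) hmlt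
    have hsq : φ ^ m * φ ^ m = 1 := by
      rw [← pow_add]
      have : m + m = n := by omega
      rw [this, hndef, pow_orderOf_eq_one]
    have hpm : φ ^ m = -1 := by
      rcases mul_self_eq_one_iff.mp hsq with h | h
      · exact absurd h hpm1
      · exact h
    have hnegpow : (-φ) ^ m = 1 := by
      rw [neg_pow, hpm, (Nat.odd_iff.mpr (by omega)).neg_one_pow]
      ring
    have : orderOf (-φ) ∣ m := orderOf_dvd_of_pow_eq_one hnegpow
    rw [hord'] at this
    have := Nat.le_of_dvd hm0 this
    omega
  · -- n odd: (-φ)^n = -1 but also = 1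
    have h1 : (-φ) ^ n = 1 := by
      rw [← hord', pow_orderOf_eq_one]
    have h2 : (-φ) ^ n = -1 := by
      rw [neg_pow, ho.neg_one_pow, hndef, pow_orderOf_eq_one]
      ring
    exact hneg (h2 ▸ h1)
end

section
/- Let p ≠ 2, 5 be a prime with p ≡ 2 or 3 (mod 5). Then there is no Fibonacci sequence in F_p with all terms nonzero whose minimal period divides p − 1. -/
/-!
If `(a n)` is a Fibonacci sequence over `𝔽_p` and `α` is a root of `X² - X - 1` in an extension,
then `a (n + 1) - (1 - α) a n = αⁿ (a 1 - (1 - α) a 0)`, and the right-hand factor is nonzero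
when `a 0 ≠ 0`, because `1 - α` is again a root of `X² - X - 1` and that polynomial has no root
in `𝔽_p` (5 is not a square mod `p` by quadratic reciprocity). A period `m ∣ p - 1` of `a` then
forces `α ^ m = 1`, so `α ^ p = α` and `α` lies in the prime field, which is impossible.
-/

open Polynomial

theorem isSquare_five_of_sq_eq_add_one {R : Type*} [CommRing R] {x : R} (hx : x ^ 2 = x + 1) :
    IsSquare (5 : R) :=
  ⟨2 * x - 1, by linear_combination (-4) * hx⟩

theorem one_sub_sq_eq_one_sub_add_one {R : Type*} [CommRing R] {x : R} (hx : x ^ 2 = x + 1) :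
    (1 - x) ^ 2 = (1 - x) + 1 := by
  linear_combination hx

theorem RingHom.apply_sq_ne_apply_add_one {K L : Type*} [Field K] [Semiring L] [Nontrivial L]
    (f : K →+* L) (h5 : ¬IsSquare (5 : K)) (r : K) : f r ^ 2 ≠ f r + 1 := fun h ↦
  h5 <| isSquare_five_of_sq_eq_add_one (x := r) <| f.injective <| by simpa using h

theorem IsAlgClosed.exists_sq_eq_add_one (k : Type*) [Field k] [IsAlgClosed k] :
    ∃ x : k, x ^ 2 = x + 1 := by
  have hdeg : (X ^ 2 - X - 1 : k[X]).degree = 2 := by compute_degree!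
  obtain ⟨x, hx⟩ := IsAlgClosed.exists_root _ (hdeg ▸ two_ne_zero)
  exact ⟨x, by simpa [sub_eq_zero, sub_sub] using hx⟩

theorem ZMod.not_isSquare_five {p : ℕ} [Fact p.Prime] (hp2 : p ≠ 2)
    (h5 : p % 5 = 2 ∨ p % 5 = 3) : ¬IsSquare (5 : ZMod p) := by
  have : Fact (Nat.Prime 5) := ⟨by norm_num⟩
  rw [show (5 : ZMod p) = ((5 : ℕ) : ZMod p) by norm_cast,
    ← ZMod.exists_sq_eq_prime_iff_of_mod_four_eq_one (p := 5) (by norm_num) hp2,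
    ← ZMod.natCast_mod]
  rcases h5 with h | h <;> rw [h] <;> decide +revert

theorem exists_castHom_eq_of_pow_char_eq_self {L : Type*} [Field L] {p : ℕ} [Fact p.Prime]
    [CharP L p] {x : L} (hx : x ^ p = x) : ∃ r : ZMod p, ZMod.castHom dvd_rfl L r = x := by
  rw [← Subfield.mem_bot_iff_pow_eq_self L p, ← ZMod.fieldRange_castHom_eq_bot p] at hx
  exact hx

theorem fib_sub_mul_eq_pow_mul {R : Type*} [CommRing R] {a : ℕ → R}
    (ha : ∀ n, a (n + 2) = a (n + 1) + a n) {α : R} (hα : α ^ 2 = α + 1) (n : ℕ) :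
    a (n + 1) - (1 - α) * a n = α ^ n * (a 1 - (1 - α) * a 0) := by
  induction n with
  | zero => simp
  | succ n ih => rw [ha, pow_succ]; linear_combination α * ih - a n * hα

theorem pow_eq_one_of_fib_periodic {K : Type*} [Field K] {a : ℕ → K}
    (ha : ∀ n, a (n + 2) = a (n + 1) + a n) {α : K} (hα : α ^ 2 = α + 1)
    (hu : a 1 - (1 - α) * a 0 ≠ 0) {m : ℕ} (hm : ∀ n, a (n + m) = a n) : α ^ m = 1 := by
  have := fib_sub_mul_eq_pow_mul ha hα m
  rw [add_comm m 1, hm, show a m = a 0 by simpa using hm 0] at this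
  exact (mul_eq_right₀ hu).1 this.symm

theorem no_fib_min_period_dvd_of_inert_general (p : ℕ) [Fact p.Prime] (hp2 : p ≠ 2)
    (h5 : p % 5 = 2 ∨ p % 5 = 3) :
    ¬∃ a : ℕ → ZMod p, (∀ n, a (n + 2) = a (n + 1) + a n) ∧ (∀ n, a n ≠ 0) ∧
      ∃ m : ℕ, IsLeast {k : ℕ | 1 ≤ k ∧ ∀ n, a (n + k) = a n} m ∧ m ∣ p - 1 := by
  rintro ⟨a, ha, ha0, m, ⟨⟨-, hm⟩, -⟩, hmp⟩
  have h5sq := ZMod.not_isSquare_five hp2 h5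
  let φ := ZMod.castHom dvd_rfl (AlgebraicClosure (ZMod p))
  obtain ⟨α, hα⟩ := IsAlgClosed.exists_sq_eq_add_one (AlgebraicClosure (ZMod p))
  have hu : φ (a 1) - (1 - α) * φ (a 0) ≠ 0 := by
    intro h
    have : φ (a 1 / a 0) = 1 - α := by
      rw [map_div₀, div_eq_iff ((map_ne_zero φ).2 (ha0 0))]; linear_combination h
    exact φ.apply_sq_ne_apply_add_one h5sq _ (this ▸ one_sub_sq_eq_one_sub_add_one hα)
  have hαm : α ^ m = 1 := pow_eq_one_of_fib_periodic (a := fun n ↦ φ (a n))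
    (fun n ↦ by simp only [ha, map_add]) hα hu (fun n ↦ by simp only [hm])
  have hαp1 : α ^ (p - 1) = 1 :=
    orderOf_dvd_iff_pow_eq_one.1 ((orderOf_dvd_of_pow_eq_one hαm).trans hmp)
  obtain ⟨r, rfl⟩ := exists_castHom_eq_of_pow_char_eq_self (x := α) <| calc
    α ^ p = α ^ (p - 1) * α := by rw [← pow_succ, Nat.sub_one_add_one (NeZero.ne p)]
    _ = α := by rw [hαp1, one_mul]
  exact φ.apply_sq_ne_apply_add_one h5sq r hα

/-- For a prime `p ≠ 2, 5` with `p ≡ 2, 3 (mod 5)`, there is no Fibonacci sequence over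
`F_p` with all terms nonzero whose minimal period divides `p - 1`. -/
theorem no_fib_min_period_dvd_of_inert (p : ℕ) [Fact p.Prime] (hp2 : p ≠ 2) (hp5 : p ≠ 5)
    (h5 : p % 5 = 2 ∨ p % 5 = 3) :
    ¬∃ a : ℕ → ZMod p, (∀ n, a (n + 2) = a (n + 1) + a n) ∧ (∀ n, a n ≠ 0) ∧
      ∃ m : ℕ, IsLeast {k : ℕ | 1 ≤ k ∧ ∀ n, a (n + k) = a n} m ∧ m ∣ p - 1 :=
  no_fib_min_period_dvd_of_inert_general p hp2 h5
end

section
/- Let p ≠ 2, 5 be a prime with p ≡ 2 or 3 (mod 5), and let φ be a root of x² − x − 1 in F_{p²}. Then ord_{F_{p²}^×}(φ) divides 2(p + 1). -/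
lemma five_not_square_aux (p : ℕ) [Fact p.Prime] (hp2 : p ≠ 2) (hp5 : p ≠ 5)
    (h5 : p % 5 = 2 ∨ p % 5 = 3) : ¬ IsSquare (5 : ZMod p) := by
  haveI : Fact (Nat.Prime 5) := ⟨by norm_num⟩
  have h50 : ((5 : ℕ) : ZMod p) ≠ 0 := by
    rw [Ne, ZMod.natCast_eq_zero_iff]
    intro h
    exact hp5 ((Nat.prime_dvd_prime_iff_eq (Fact.out) (by norm_num)).mp h)
  intro hsq
  have h1 : legendreSym p 5 = 1 := by
    apply (legendreSym.eq_one_iff p (by exact_mod_cast h50)).mpr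
    exact_mod_cast hsq
  have hqr := legendreSym.quadratic_reciprocity (p := 5) (q := p) (by norm_num) hp2
    (fun h => hp5 h.symm)
  norm_num at hqr
  have h2 : legendreSym 5 (p : ℤ) = 1 := by simpa [h1] using hqr
  have h3 := legendreSym.mod 5 (p : ℤ)
  rw [h2] at h3
  have hmod : ((p : ℤ) % ((5:ℕ) : ℤ)) = ((p % 5 : ℕ) : ℤ) := by push_cast; rfl
  rw [hmod] at h3
  rcases h5 with h | h <;> rw [h] at h3 <;> norm_num at h3 <;> revert h3 <;> decide


/-- For a prime `p ≠ 2, 5` with `p ≡ 2, 3 (mod 5)`, a root `φ` of `x² - x - 1` in `F_{p²}`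
has multiplicative order dividing `2(p + 1)`. -/
theorem order_of_golden_root_dvd (p : ℕ) [Fact p.Prime] (hp2 : p ≠ 2) (hp5 : p ≠ 5)
    (h5 : p % 5 = 2 ∨ p % 5 = 3)
    (K : Type*) [Field K] [Fintype K] (hK : Fintype.card K = p ^ 2)
    (φ : K) (hφ : φ ^ 2 = φ + 1) :
    orderOf φ ∣ 2 * (p + 1) := by
  have hp : p.Prime := Fact.out
  have hodd : p % 2 = 1 := hp.eq_two_or_odd.resolve_left hp2
  -- characteristic of K is p
  have hcard0 : ((Fintype.card K : K)) = 0 := FiniteField.cast_card_eq_zero K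
  have hchar : CharP K p := by
    have h := hcard0
    rw [hK] at h
    push_cast at h
    have hp0 : (p : K) = 0 := by
      have := pow_eq_zero_iff (n := 2) (by norm_num) |>.mp h
      exact this
    have hrc : ringChar K ∣ p := ringChar.dvd hp0
    have hrcp : ringChar K = p := by
      rcases (Nat.Prime.eq_one_or_self_of_dvd hp _ hrc) with h1 | h1
      · exact absurd h1 (CharP.ringChar_ne_one)
      · exact h1
    rw [← hrcp]
    exact ringChar.charP K
  -- φ^p is also a root of x^2 - x - 1
  have hfrob : (φ ^ p) ^ 2 = φ ^ p + 1 := by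
    have : (φ ^ 2) ^ p = (φ + 1) ^ p := by rw [hφ]
    rw [add_pow_char, one_pow] at this
    rw [← this]; ring
  -- factorization: φ^p = φ or φ^p = 1 - φ
  have hcases : φ ^ p = φ ∨ φ ^ p = 1 - φ := by
    have hprod : (φ ^ p - φ) * (φ ^ p - (1 - φ)) = 0 := by
      linear_combination hfrob - hφ
    rcases mul_eq_zero.mp hprod with h | h
    · left; exact sub_eq_zero.mp h
    · right; exact sub_eq_zero.mp h
  rcases hcases with hfix | hconj
  · -- φ is fixed by Frobenius: derive 5 is a square mod p, contradiction
    exfalso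
    set x : K := 2 * φ - 1 with hx
    have hx2 : x ^ 2 = 5 := by
      have : x ^ 2 = 4 * (φ ^ 2) - 4 * φ + 1 := by rw [hx]; ring
      rw [this, hφ]; ring
    have hx0 : x ≠ 0 := by
      intro h0
      have : (5 : K) = 0 := by rw [← hx2, h0]; ring
      have h5K : ((5 : ℕ) : K) = 0 := by exact_mod_cast this
      rw [CharP.cast_eq_zero_iff K p] at h5K
      exact hp5 ((Nat.prime_dvd_prime_iff_eq hp (by norm_num)).mp h5K)
    have hxp : x ^ p = x := by
      have h2p : ((2 : ℕ) : K) ^ p = ((2 : ℕ) : K) := by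
        have := map_natCast (frobenius K p) 2
        rwa [frobenius_def] at this
      calc x ^ p = (2 * φ - 1) ^ p := by rw [hx]
        _ = (2 * φ) ^ p - 1 ^ p := by
              rw [sub_pow_char]
        _ = 2 ^ p * φ ^ p - 1 := by rw [mul_pow, one_pow]
        _ = 2 * φ - 1 := by
              rw [hfix]; norm_num at h2p; rw [h2p]
    have hxp1 : x ^ (p - 1) = 1 := by
      have h1 : x ^ (p - 1) * x = x := by
        rw [← pow_succ, Nat.sub_add_cancel hp.one_lt.le, hxp]
      field_simp at h1
      exact h1
    have h5pow : (5 : K) ^ (p / 2) = 1 := by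
      rw [← hx2, ← pow_mul]
      have : 2 * (p / 2) = p - 1 := by omega
      rw [this, hxp1]
    -- transfer to ZMod p
    have h50 : (5 : ZMod p) ≠ 0 := by
      intro h0
      have : ((5 : ℕ) : ZMod p) = 0 := by exact_mod_cast h0
      rw [ZMod.natCast_eq_zero_iff] at this
      exact hp5 ((Nat.prime_dvd_prime_iff_eq hp (by norm_num)).mp this)
    have hinj := (ZMod.castHom (dvd_refl p) K).injective
    have h5z : (5 : ZMod p) ^ (p / 2) = 1 := by
      apply hinj
      rw [map_pow, map_one]
      have : (ZMod.castHom (dvd_refl p) K) (5 : ZMod p) = (5 : K) :=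
        map_ofNat (ZMod.castHom (dvd_refl p) K) 5
      rw [this, h5pow]
    exact five_not_square_aux p hp2 hp5 h5 ((ZMod.euler_criterion p h50).mpr h5z)
  · -- φ^(p+1) = -1
    have hppow : φ ^ (p + 1) = -1 := by
      have : φ ^ (p + 1) = φ ^ p * φ := by rw [pow_succ]
      rw [this, hconj]
      linear_combination -hφ
    apply orderOf_dvd_of_pow_eq_one
    have : φ ^ (2 * (p + 1)) = (φ ^ (p + 1)) ^ 2 := by rw [← pow_mul, mul_comm]
    rw [this, hppow]
    ring
end
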